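/- If σ is an integral curve of a unit vector field V on a Riemannian manifold such that at every point x on the curve, the angle between V(x) and every unit vector tangent to a minimizing geodesic from p to x is less than α ∈ (0, π/2), then for s < t, d(p, σ(t)) − d(p, σ(s)) > cos(α)(t − s). -/
import Mathlib

open Real Set Metric InnerProductGeometry
open scoped RealInnerProductSpace

/-- Euclidean model, since Mathlib has no Riemannian geodesic theory:
In `ℝⁿ` the unique minimizing geodesic from `p` to `x ≠ p` has unit tangent
`(x - p)/‖x - p‖` at `x`, so `G_p(x) = {(x-p)/‖x-p‖}`.  If `V` is a smooth unit
vector field on an open set `U ⊆ ℝⁿ \ {p}` making angle `< α < π/2` with this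
direction at every point of `U`, and `σ : [a,b] → U` is an integral curve of
`V`, then for `s < t`, `d(p, σ t) - d(p, σ s) > cos α * (t - s)`. -/
theorem stmt_2 {n : ℕ} (p : EuclideanSpace ℝ (Fin n))
    (U : Set (EuclideanSpace ℝ (Fin n))) (hU : IsOpen U) (hUp : p ∉ U)
    (V : EuclideanSpace ℝ (Fin n) → EuclideanSpace ℝ (Fin n))
    (hVsmooth : ContDiffOn ℝ (⊤ : ℕ∞) V U) (hVunit : ∀ x ∈ U, ‖V x‖ = 1)
    (α : ℝ) (hα : α ∈ Ioo 0 (π / 2))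
    (hangle : ∀ x ∈ U, angle (V x) (‖x - p‖⁻¹ • (x - p)) < α)
    (a b : ℝ) (σ : ℝ → EuclideanSpace ℝ (Fin n))
    (hσU : ∀ t ∈ Icc a b, σ t ∈ U)
    (hσ : ∀ t ∈ Icc a b, HasDerivAt σ (V (σ t)) t) :
    ∀ s ∈ Icc a b, ∀ t ∈ Icc a b, s < t →
      dist p (σ t) - dist p (σ s) > Real.cos α * (t - s) := by
  set f : ℝ → ℝ := fun u => dist p (σ u) with hf
  -- the derivative of f at each point of Icc a b
  have key : ∀ t ∈ Icc a b, HasDerivAt f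
      (inner (𝕜 := ℝ) (‖σ t - p‖⁻¹ • (σ t - p)) (V (σ t))) t := by
    intro t ht
    have hx : σ t ∈ U := hσU t ht
    have hne : σ t - p ≠ 0 := sub_ne_zero.mpr (fun h => hUp (h ▸ hx))
    have hnorm : ‖σ t - p‖ ≠ 0 := norm_ne_zero_iff.mpr hne
    have h1 : HasDerivAt (fun u => σ u - p) (V (σ t)) t := (hσ t ht).sub_const p
    have h2 : HasDerivAt (fun u => (inner (𝕜 := ℝ) (σ u - p) (σ u - p)))
        ((inner (𝕜 := ℝ) (σ t - p) (V (σ t))) + (inner (𝕜 := ℝ) (V (σ t)) (σ t - p))) t := h1.inner ℝ h1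
    have hpos : (0:ℝ) < (inner (𝕜 := ℝ) (σ t - p) (σ t - p)) := by
      rw [real_inner_self_eq_norm_mul_norm]
      exact mul_pos (norm_pos_iff.mpr hne) (norm_pos_iff.mpr hne)
    have h3 := h2.sqrt hpos.ne'
    have heq : (fun u => Real.sqrt (inner (𝕜 := ℝ) (σ u - p) (σ u - p))) = f := by
      funext u
      simp only [hf, dist_eq_norm, norm_sub_rev p, norm_eq_sqrt_real_inner]
    rw [heq] at h3
    have hrw : ((inner (𝕜 := ℝ) (σ t - p) (V (σ t)) : ℝ)
          + inner (𝕜 := ℝ) (V (σ t)) (σ t - p))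
          / (2 * Real.sqrt (inner (𝕜 := ℝ) (σ t - p) (σ t - p)))
        = inner (𝕜 := ℝ) (‖σ t - p‖⁻¹ • (σ t - p)) (V (σ t)) := by
      rw [real_inner_comm (V (σ t)) (σ t - p), ← norm_eq_sqrt_real_inner,
        real_inner_smul_left]
      set c := ‖σ t - p‖ with hc
      set I : ℝ := inner (𝕜 := ℝ) (σ t - p) (V (σ t)) with hI
      rw [div_eq_iff (mul_ne_zero two_ne_zero hnorm)]
      have h4 : c⁻¹ * I * (2 * c) = 2 * I * (c⁻¹ * c) := by ring
      rw [h4, inv_mul_cancel₀ hnorm]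
      have h5 : (inner (𝕜 := ℝ) (V (σ t)) (σ t - p) : ℝ) = I := by
        rw [hI, real_inner_comm]
      rw [h5]
      ring
    rw [← hrw]
    exact h3
  -- the derivative is > cos α on Icc a b
  have hgt : ∀ t ∈ Icc a b,
      Real.cos α < inner (𝕜 := ℝ) (‖σ t - p‖⁻¹ • (σ t - p)) (V (σ t)) := by
    intro t ht
    have hx : σ t ∈ U := hσU t ht
    have hne : σ t - p ≠ 0 := sub_ne_zero.mpr (fun h => hUp (h ▸ hx))
    have hnorm : ‖σ t - p‖ ≠ 0 := norm_ne_zero_iff.mpr hne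
    set u := ‖σ t - p‖⁻¹ • (σ t - p) with hu
    have hunorm : ‖u‖ = 1 := by
      rw [hu, norm_smul, norm_inv, norm_norm, inv_mul_cancel₀ hnorm]
    have hcos : Real.cos (angle (V (σ t)) u) = (inner (𝕜 := ℝ) (V (σ t)) (u)) := by
      rw [cos_angle, hVunit _ hx, hunorm]
      simp
    have hangle' := hangle _ hx
    have h1 : Real.cos α < Real.cos (angle (V (σ t)) u) := by
      apply Real.strictAntiOn_cos ⟨angle_nonneg _ _, angle_le_pi _ _⟩
        ⟨hα.1.le, le_of_lt (lt_of_lt_of_le hα.2 (by linarith [Real.pi_pos]))⟩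
      exact hangle'
    rw [hcos, real_inner_comm] at h1
    exact h1
  intro s hs t ht hst
  have hconv : Convex ℝ (Icc a b) := convex_Icc a b
  have hcont : ContinuousOn f (Icc a b) := fun x hx =>
    ((key x hx).continuousAt).continuousWithinAt
  have hintsub : interior (Icc a b) ⊆ Icc a b := interior_subset
  have hdiff : DifferentiableOn ℝ f (interior (Icc a b)) := fun x hx =>
    ((key x (hintsub hx)).differentiableAt).differentiableWithinAt
  have hderiv : ∀ x ∈ interior (Icc a b), Real.cos α < deriv f x := by
    intro x hx
    rw [(key x (hintsub hx)).deriv]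
    exact hgt x (hintsub hx)
  exact hconv.mul_sub_lt_image_sub_of_lt_deriv hcont hdiff hderiv s hs t ht hst
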